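/- arXiv:1608.01971 — 4 statements merged into one kernel-verified Lean document; each statement's English description precedes it below -/
import Mathlib

section
/- Let T be a finite tree and for each i let l_i denote the number of vertices of T of degree i. Any set E' of edges (pairs of non-adjacent vertices of T) whose addition to T yields an r-vertex-connected graph satisfies |E'| ≥ ⌈(1/2) · Σ_{i=1}^{r-1} (r-i)·l_i ⌉. -/
/-!
In an `r`-vertex-connected graph every vertex has degree at least `r`, so a vertex `v` of `T` must
be an endpoint of at least `r - deg_T v` added edges. Summing over all vertices counts each added
edge at most twice, and grouping the vertices by their degree in `T` gives the sum `∑ (r - i) l_i`.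
-/

open SimpleGraph Finset
open scoped Classical

def SimpleGraph.IsVertexConnected {V : Type*} [Fintype V] (G : SimpleGraph V) (r : ℕ) : Prop :=
  r < Fintype.card V ∧
    ∀ S : Finset V, S.card < r → (SimpleGraph.induce ((↑S : Set V)ᶜ) G).Connected

theorem SimpleGraph.IsVertexConnected.le_degree {V : Type*} [Fintype V] {G : SimpleGraph V}
    {r : ℕ} (h : G.IsVertexConnected r) (v : V) [Fintype (G.neighborSet v)] :
    r ≤ G.degree v := by
  by_contra! hlt
  rw [← card_neighborFinset_eq_degree] at hlt
  set S := G.neighborFinset v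
  obtain ⟨w, hw⟩ : (insert v S)ᶜ.Nonempty := by
    rw [← card_pos, card_compl]
    have := card_insert_le v S
    have := h.1
    omega
  rw [mem_compl, mem_insert, not_or] at hw
  have hv : v ∈ (S : Set V)ᶜ := by simp [S]
  have hw' : w ∈ (S : Set V)ᶜ := by simpa using hw.2
  have : Nontrivial ((S : Set V)ᶜ : Set V) :=
    ⟨⟨⟨v, hv⟩, ⟨w, hw'⟩, fun h => hw.1 (congrArg Subtype.val h).symm⟩⟩
  -- once its neighbourhood is deleted, `v` is isolated in a graph that is still connected
  obtain ⟨u, hu⟩ := (h.2 S hlt).preconnected.exists_adj_of_nontrivial ⟨v, hv⟩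
  exact u.2 (by simpa [S] using hu)

theorem SimpleGraph.degree_sup_le {V : Type*} (G H : SimpleGraph V) (v : V)
    [Fintype (G.neighborSet v)] [Fintype (H.neighborSet v)] [Fintype ((G ⊔ H).neighborSet v)] :
    (G ⊔ H).degree v ≤ G.degree v + H.degree v := by
  simp only [← card_neighborFinset_eq_degree, neighborFinset_sup]
  exact card_union_le _ _

theorem SimpleGraph.sum_degree_fromEdgeSet_le {V : Type*} [Fintype V] (s : Finset (Sym2 V)) :
    ∑ v, (fromEdgeSet (s : Set (Sym2 V))).degree v ≤ 2 * #s := by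
  rw [sum_degrees_eq_twice_card_edges]
  gcongr
  intro e
  simp +contextual

theorem Finset.sum_mul_card_fiber_le {α β : Type*} [Fintype α] [DecidableEq β] (f : α → β)
    (g : β → ℕ) (s : Finset β) : ∑ i ∈ s, g i * #{a | f a = i} ≤ ∑ a, g (f a) := by
  calc ∑ i ∈ s, g i * #{a | f a = i} = ∑ i ∈ s, ∑ a with f a = i, g (f a) := by
        refine sum_congr rfl fun i _ => ?_
        rw [sum_congr rfl fun a ha => by rw [(mem_filter.mp ha).2], sum_const, smul_eq_mul,
          mul_comm]
    _ = ∑ a with f a ∈ s, g (f a) := sum_fiberwise_eq_sum_filter _ _ _ _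
    _ ≤ ∑ a, g (f a) := sum_le_sum_of_subset (filter_subset _ _)

theorem tree_augmentation_lower_bound_general {V : Type*} [Fintype V] (T : SimpleGraph V)
    (r : ℕ)
    (E' : Finset (Sym2 V))
    (hconn : (SimpleGraph.fromEdgeSet (T.edgeSet ∪ (↑E' : Set (Sym2 V)))).IsVertexConnected r) :
    ((∑ i ∈ Finset.Icc 1 (r - 1),
        (r - i) * (Finset.univ.filter (fun v : V => T.degree v = i)).card) + 1) / 2
      ≤ E'.card := by
  rw [fromEdgeSet_union, fromEdgeSet_edgeSet] at hconn
  set H := fromEdgeSet (E' : Set (Sym2 V))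
  have hdeg (v : V) : r - T.degree v ≤ H.degree v := by
    have := hconn.le_degree v
    have := degree_sup_le T H v
    omega
  have hsum : ∑ i ∈ Icc 1 (r - 1), (r - i) * #{v | T.degree v = i} ≤ 2 * #E' :=
    calc _ ≤ ∑ v, (r - T.degree v) := sum_mul_card_fiber_le (T.degree ·) (r - ·) _
      _ ≤ ∑ v, H.degree v := sum_le_sum fun v _ => hdeg v
      _ ≤ 2 * #E' := sum_degree_fromEdgeSet_le E'
  omega

theorem tree_augmentation_lower_bound {V : Type*} [Fintype V] (T : SimpleGraph V)
    (hT : T.IsTree) (r : ℕ) (hr : 2 ≤ r) (hrn : r < Fintype.card V)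
    (E' : Finset (Sym2 V))
    (hE : ∀ e ∈ E', e ∉ T.edgeSet ∧ ¬ e.IsDiag)
    (hconn : (SimpleGraph.fromEdgeSet (T.edgeSet ∪ (↑E' : Set (Sym2 V)))).IsVertexConnected r) :
    ((∑ i ∈ Finset.Icc 1 (r - 1),
        (r - i) * (Finset.univ.filter (fun v : V => T.degree v = i)).card) + 1) / 2
      ≤ E'.card :=
  tree_augmentation_lower_bound_general T r E' hconn
end

section
/- For integers 2 ≤ r < n, the Harary graph H_{r,n} has vertex connectivity exactly r. -/
open SimpleGraph Finset
open scoped Classical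


/-- The Harary graph `H_{r,n}` on the vertices `ZMod n` placed around a circle. -/
noncomputable def harary (r n : ℕ) : SimpleGraph (ZMod n) :=
  if Even r then
    SimpleGraph.fromRel (fun i j => ∃ k : ℕ, 1 ≤ k ∧ k ≤ r / 2 ∧ j = i + (k : ZMod n))
  else if Even n then
    SimpleGraph.fromRel (fun i j =>
      (∃ k : ℕ, 1 ≤ k ∧ k ≤ (r - 1) / 2 ∧ j = i + (k : ZMod n)) ∨
      j = i + ((n / 2 : ℕ) : ZMod n))
  else
    SimpleGraph.fromRel (fun i j =>
      (∃ k : ℕ, 1 ≤ k ∧ k ≤ (r - 1) / 2 ∧ j = i + (k : ZMod n)) ∨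
      (∃ m : ℕ, 1 ≤ m ∧ m ≤ (n + 1) / 2 ∧ i = (m : ZMod n) ∧
        j = i + (((n - 1) / 2 : ℕ) : ZMod n)))

/-- The vertex connectivity of `G`: the minimum size of a vertex set whose removal
disconnects the graph, or `|V| - 1` for a complete graph. -/
noncomputable def vertexConnectivity {V : Type*} [Fintype V] (G : SimpleGraph V) : ℕ :=
  sInf ({k | ∃ S : Finset V, S.card = k ∧
    ¬ (SimpleGraph.induce ((↑S : Set V)ᶜ) G).Connected} ∪ {Fintype.card V - 1})

section Infra
variable {n : ℕ} [NeZero n]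

lemma cast_inj_lt {a b : ℕ} (ha : a < n) (hb : b < n) (h : (a : ZMod n) = b) : a = b := by
  have := congrArg ZMod.val h
  rwa [ZMod.val_cast_of_lt ha, ZMod.val_cast_of_lt hb] at this

lemma add_cast_inj {u : ZMod n} {a b : ℕ} (ha : a < n) (hb : b < n)
    (h : u + (a : ZMod n) = u + b) : a = b :=
  cast_inj_lt ha hb (by exact add_left_cancel h)

lemma cast_ne_zero_of {a : ℕ} (h1 : 1 ≤ a) (h2 : a < n) : (a : ZMod n) ≠ 0 := by
  intro h
  have : a = 0 := cast_inj_lt h2 (Nat.pos_of_ne_zero (NeZero.ne n)) (by simpa using h)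
  omega

/-- Walking along an arc: if every window of `m` consecutive interior vertices contains a
survivor, then `u` and `u + d` are reachable in the induced graph on the complement of `S`. -/
lemma walk_arc (G : SimpleGraph (ZMod n)) (S : Set (ZMod n)) (m : ℕ) (hm : 1 ≤ m)
    (hadj : ∀ (x : ZMod n) (k : ℕ), 1 ≤ k → k ≤ m → G.Adj x (x + (k : ZMod n)))
    (d : ℕ) (hd : d < n) :
    ∀ (u : ZMod n) (hu : u ∉ S) (hv : u + (d : ZMod n) ∉ S)
    (_ : ∀ t : ℕ, 1 ≤ t → t + m ≤ d → ∃ s, s < m ∧ (u + ((t + s : ℕ) : ZMod n)) ∉ S),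
    (G.induce Sᶜ).Reachable ⟨u, hu⟩ ⟨u + (d : ZMod n), hv⟩ := by
  induction d using Nat.strong_induction_on with
  | _ d ih =>
    intro u hu hv hint
    rcases Nat.eq_zero_or_pos d with h0 | h0
    · subst h0
      have he : (⟨u, hu⟩ : ↥Sᶜ) = ⟨u + ((0 : ℕ) : ZMod n), hv⟩ := Subtype.ext (by simp)
      exact he ▸ Reachable.refl _
    · rcases le_or_gt d m with hdm | hdm
      · exact (Adj.reachable (by
          show (G.induce Sᶜ).Adj ⟨u, hu⟩ ⟨u + (d : ZMod n), hv⟩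
          exact hadj u d h0 hdm))
      · obtain ⟨s, hs, hns⟩ := hint 1 le_rfl (by omega)
        set k := 1 + s with hk
        have hk1 : 1 ≤ k := by omega
        have hkm : k ≤ m := by omega
        have hadjuk : G.Adj u (u + (k : ZMod n)) := hadj u k hk1 hkm
        have h1 : (G.induce Sᶜ).Adj ⟨u, hu⟩ ⟨u + (k : ZMod n), hns⟩ := hadjuk
        have hcast : (u + (k : ZMod n)) + ((d - k : ℕ) : ZMod n) = u + (d : ZMod n) := by
          rw [add_assoc, ← Nat.cast_add]
          congr 2
          omega
        have hv' : (u + (k : ZMod n)) + ((d - k : ℕ) : ZMod n) ∉ S := by rwa [hcast]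
        have hrec := ih (d - k) (by omega) (by omega) (u + (k : ZMod n)) hns hv' (by
          intro t ht htm
          obtain ⟨s', hs', hns'⟩ := hint (k + t) (by omega) (by omega)
          refine ⟨s', hs', ?_⟩
          have : u + ((k + t + s' : ℕ) : ZMod n) = (u + (k : ZMod n)) + ((t + s' : ℕ) : ZMod n) := by
            push_cast
            ring
          rwa [this] at hns')
        have := h1.reachable.trans hrec
        convert this using 2
        exact hcast.symm

set_option linter.unusedSectionVars false

/-- Reachability within a surviving segment. -/
lemma reach_seg (G : SimpleGraph (ZMod n)) (S : Set (ZMod n)) (m : ℕ) (hm : 1 ≤ m)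
    (hadj : ∀ (x : ZMod n) (k : ℕ), 1 ≤ k → k ≤ m → G.Adj x (x + (k : ZMod n)))
    (u : ZMod n) (e₁ e₂ : ℕ) (h12 : e₁ ≤ e₂) (h2n : e₂ ≤ n) (hdn : e₂ - e₁ < n)
    (hsurv : ∀ e, e₁ ≤ e → e ≤ e₂ → u + ((e : ℕ) : ZMod n) ∉ S)
    (h1 : u + ((e₁ : ℕ) : ZMod n) ∉ S) (h2 : u + ((e₂ : ℕ) : ZMod n) ∉ S) :
    (G.induce Sᶜ).Reachable ⟨u + ((e₁ : ℕ) : ZMod n), h1⟩ ⟨u + ((e₂ : ℕ) : ZMod n), h2⟩ := by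
  have hcast : (u + ((e₁ : ℕ) : ZMod n)) + ((e₂ - e₁ : ℕ) : ZMod n)
      = u + ((e₂ : ℕ) : ZMod n) := by
    rw [add_assoc, ← Nat.cast_add]
    congr 2
    omega
  have h2' : (u + ((e₁ : ℕ) : ZMod n)) + ((e₂ - e₁ : ℕ) : ZMod n) ∉ S := by rwa [hcast]
  have := walk_arc G S m hm hadj (e₂ - e₁) hdn (u + ((e₁ : ℕ) : ZMod n)) h1 h2' (by
    intro t ht htm
    refine ⟨0, by omega, ?_⟩
    have : (u + ((e₁ : ℕ) : ZMod n)) + ((t + 0 : ℕ) : ZMod n) = u + ((e₁ + t : ℕ) : ZMod n) := by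
      push_cast; ring
    rw [this]
    exact hsurv (e₁ + t) (by omega) (by omega))
  convert this using 2
  exact hcast.symm

/-- Either reachable, or the removed set is exactly two runs of `m` consecutive vertices. -/
lemma engine (G : SimpleGraph (ZMod n)) (S : Finset (ZMod n)) (m : ℕ) (hm : 1 ≤ m)
    (hcard : S.card ≤ 2 * m)
    (hadj : ∀ (x : ZMod n) (k : ℕ), 1 ≤ k → k ≤ m → G.Adj x (x + (k : ZMod n)))
    (u : ZMod n) (d : ℕ) (hd1 : 1 ≤ d) (hdn : d < n)
    (hu : u ∉ S) (hv : u + (d : ZMod n) ∉ S)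
    (hu' : u ∉ (↑S : Set (ZMod n))) (hv' : u + (d : ZMod n) ∉ (↑S : Set (ZMod n))) :
    (G.induce (↑S : Set (ZMod n))ᶜ).Reachable ⟨u, hu'⟩ ⟨u + (d : ZMod n), hv'⟩
    ∨ ∃ t t', 1 ≤ t ∧ t + m ≤ d ∧ 1 ≤ t' ∧ d + t' + m ≤ n ∧ S.card = 2 * m ∧
      (∀ x ∈ S, ∃ s, s < m ∧ (x = u + ((t + s : ℕ) : ZMod n) ∨
        x = u + ((d + t' + s : ℕ) : ZMod n))) := by
  by_cases harc1 : ∀ t : ℕ, 1 ≤ t → t + m ≤ d →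
      ∃ s, s < m ∧ (u + ((t + s : ℕ) : ZMod n)) ∉ (↑S : Set (ZMod n))
  · exact Or.inl (walk_arc G _ m hm hadj d hdn u hu' hv' harc1)
  push_neg at harc1
  obtain ⟨t, ht1, htm, hrun1⟩ := harc1
  by_cases harc2 : ∀ t : ℕ, 1 ≤ t → t + m ≤ n - d →
      ∃ s, s < m ∧ ((u + (d : ZMod n)) + ((t + s : ℕ) : ZMod n)) ∉ (↑S : Set (ZMod n))
  · left
    have hw := walk_arc G _ m hm hadj (n - d) (by omega) (u + (d : ZMod n)) hv' (by
      have : (u + (d : ZMod n)) + ((n - d : ℕ) : ZMod n) = u := by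
        rw [add_assoc, ← Nat.cast_add]
        have : ((d + (n - d) : ℕ) : ZMod n) = ((n : ℕ) : ZMod n) := by congr 1; omega
        rw [this, ZMod.natCast_self, add_zero]
      rwa [this]) harc2
    have hcast : (u + (d : ZMod n)) + ((n - d : ℕ) : ZMod n) = u := by
      rw [add_assoc, ← Nat.cast_add]
      have : ((d + (n - d) : ℕ) : ZMod n) = ((n : ℕ) : ZMod n) := by congr 1; omega
      rw [this, ZMod.natCast_self, add_zero]
    have : (G.induce (↑S : Set (ZMod n))ᶜ).Reachable ⟨u + (d : ZMod n), hv'⟩ ⟨u, hu'⟩ := by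
      convert hw using 2
      exact hcast.symm
    exact this.symm
  push_neg at harc2
  obtain ⟨t', ht1', htm', hrun2⟩ := harc2
  right
  have hrun2' : ∀ s, s < m → u + ((d + t' + s : ℕ) : ZMod n) ∈ S := by
    intro s hs
    have := hrun2 s hs
    have hc : (u + (d : ZMod n)) + ((t' + s : ℕ) : ZMod n) = u + ((d + t' + s : ℕ) : ZMod n) := by
      push_cast; ring
    rw [hc] at this
    simpa using this
  have hrun1' : ∀ s, s < m → u + ((t + s : ℕ) : ZMod n) ∈ S := by
    intro s hs
    have := hrun1 s hs
    simpa using this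
  set F : Finset (ZMod n) :=
    ((Finset.range m).image fun s => u + ((t + s : ℕ) : ZMod n)) ∪
    ((Finset.range m).image fun s => u + ((d + t' + s : ℕ) : ZMod n)) with hF
  have hFS : F ⊆ S := by
    intro x hx
    rw [hF, Finset.mem_union] at hx
    rcases hx with hx | hx <;> obtain ⟨s, hs, rfl⟩ := Finset.mem_image.mp hx
    · exact hrun1' s (Finset.mem_range.mp hs)
    · exact hrun2' s (Finset.mem_range.mp hs)
  have hcard1 : ((Finset.range m).image fun s => u + ((t + s : ℕ) : ZMod n)).card = m := by
    rw [Finset.card_image_of_injOn, Finset.card_range]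
    intro a ha b hb hab
    simp only [Finset.coe_range, Set.mem_Iio] at ha hb
    have := add_cast_inj (u := u) (a := t + a) (b := t + b) (by omega) (by omega) hab
    omega
  have hcard2 : ((Finset.range m).image fun s => u + ((d + t' + s : ℕ) : ZMod n)).card = m := by
    rw [Finset.card_image_of_injOn, Finset.card_range]
    intro a ha b hb hab
    simp only [Finset.coe_range, Set.mem_Iio] at ha hb
    have := add_cast_inj (u := u) (a := d + t' + a) (b := d + t' + b) (by omega) (by omega) hab
    omega
  have hdisj : Disjoint ((Finset.range m).image fun s => u + ((t + s : ℕ) : ZMod n))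
      ((Finset.range m).image fun s => u + ((d + t' + s : ℕ) : ZMod n)) := by
    rw [Finset.disjoint_left]
    intro x hx hx'
    obtain ⟨a, ha, rfl⟩ := Finset.mem_image.mp hx
    obtain ⟨b, hb, hab⟩ := Finset.mem_image.mp hx'
    simp only [Finset.mem_range] at ha hb
    have := add_cast_inj (u := u) (a := d + t' + b) (b := t + a) (by omega) (by omega) hab
    omega
  have hFcard : F.card = 2 * m := by
    rw [hF, Finset.card_union_of_disjoint hdisj, hcard1, hcard2]
    omega
  have hSF : F = S := Finset.eq_of_subset_of_card_le hFS (by omega)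
  refine ⟨t, t', ht1, htm, ht1', by omega, hSF ▸ hFcard, ?_⟩
  intro x hx
  rw [← hSF, hF, Finset.mem_union] at hx
  rcases hx with hx | hx <;> obtain ⟨s, hs, rfl⟩ := Finset.mem_image.mp hx
  · exact ⟨s, Finset.mem_range.mp hs, Or.inl rfl⟩
  · exact ⟨s, Finset.mem_range.mp hs, Or.inr rfl⟩

/-- Bridge: given that `S` consists exactly of two runs, and a chord between the two
surviving gaps, `u` and `u + d` are reachable. -/
lemma bridge (G : SimpleGraph (ZMod n)) (S : Finset (ZMod n)) (m : ℕ) (hm : 1 ≤ m)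
    (hadj : ∀ (x : ZMod n) (k : ℕ), 1 ≤ k → k ≤ m → G.Adj x (x + (k : ZMod n)))
    (u : ZMod n) (d t t' : ℕ)
    (hd1 : 1 ≤ d) (hdn : d < n)
    (ht1 : 1 ≤ t) (htm : t + m ≤ d) (ht1' : 1 ≤ t') (htm' : d + t' + m ≤ n)
    (hmem : ∀ x ∈ S, ∃ s, s < m ∧ (x = u + ((t + s : ℕ) : ZMod n) ∨
        x = u + ((d + t' + s : ℕ) : ZMod n)))
    (eP eQ : ℕ) (heP1 : t + m ≤ eP) (heP2 : eP < d + t')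
    (heQ : eQ < t ∨ (d + t' + m ≤ eQ ∧ eQ < n))
    (hchord : G.Adj (u + ((eQ : ℕ) : ZMod n)) (u + ((eP : ℕ) : ZMod n)))
    (hu' : u ∉ (↑S : Set (ZMod n))) (hv' : u + (d : ZMod n) ∉ (↑S : Set (ZMod n))) :
    (G.induce (↑S : Set (ZMod n))ᶜ).Reachable ⟨u, hu'⟩ ⟨u + (d : ZMod n), hv'⟩ := by
  have hns : ∀ e : ℕ, e ≤ n → (e < t ∨ (t + m ≤ e ∧ e < d + t') ∨ d + t' + m ≤ e) →
      u + ((e : ℕ) : ZMod n) ∉ (↑S : Set (ZMod n)) := by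
    intro e hen hcases hmemS
    rcases Nat.eq_or_lt_of_le hen with heq | hen'
    · have : u + ((e : ℕ) : ZMod n) = u := by
        rw [heq, ZMod.natCast_self, add_zero]
      rw [this] at hmemS
      exact hu' hmemS
    · obtain ⟨s, hs, hx⟩ := hmem _ (by simpa using hmemS)
      rcases hx with hx | hx
      · have := add_cast_inj (u := u) (a := e) (b := t + s) hen' (by omega) hx
        omega
      · have := add_cast_inj (u := u) (a := e) (b := d + t' + s) hen' (by omega) hx
        omega
  -- membership facts
  have hPmem : ∀ e : ℕ, t + m ≤ e → e < d + t' → u + ((e : ℕ) : ZMod n) ∉ (↑S : Set (ZMod n)) :=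
    fun e h1 h2 => hns e (by omega) (Or.inr (Or.inl ⟨h1, h2⟩))
  have hQmem : ∀ e : ℕ, e ≤ n → (e < t ∨ d + t' + m ≤ e) →
      u + ((e : ℕ) : ZMod n) ∉ (↑S : Set (ZMod n)) := by
    intro e h1 h2
    exact hns e h1 (by omega)
  have hePS : u + ((eP : ℕ) : ZMod n) ∉ (↑S : Set (ZMod n)) := hPmem eP heP1 heP2
  have heQS : u + ((eQ : ℕ) : ZMod n) ∉ (↑S : Set (ZMod n)) := by
    refine hQmem eQ (by omega) (by omega)
  -- step 1 : reach from u to u + eQ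
  have step1 : (G.induce (↑S : Set (ZMod n))ᶜ).Reachable ⟨u, hu'⟩
      ⟨u + ((eQ : ℕ) : ZMod n), heQS⟩ := by
    rcases heQ with h | ⟨h1, h2⟩
    · have h0 : u + ((0 : ℕ) : ZMod n) ∉ (↑S : Set (ZMod n)) := by
        simpa using hu'
      have := reach_seg G _ m hm hadj u 0 eQ (by omega) (by omega) (by omega)
        (fun e he1 he2 => hQmem e (by omega) (by omega)) h0 heQS
      have heq : (⟨u, hu'⟩ : ((↑S : Set (ZMod n))ᶜ : Set (ZMod n))) = ⟨u + ((0 : ℕ) : ZMod n), h0⟩ :=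
        Subtype.ext (by simp)
      rwa [heq]
    · have hn0 : u + ((n : ℕ) : ZMod n) ∉ (↑S : Set (ZMod n)) := by
        rw [ZMod.natCast_self, add_zero]; exact hu'
      have := reach_seg G _ m hm hadj u eQ n (by omega) (le_refl n) (by omega)
        (fun e he1 he2 => hQmem e he2 (by omega)) heQS hn0
      have := this.symm
      convert this using 2
      rw [ZMod.natCast_self, add_zero]
  -- step 2 : chord
  have step2 : (G.induce (↑S : Set (ZMod n))ᶜ).Adj
      ⟨u + ((eQ : ℕ) : ZMod n), heQS⟩ ⟨u + ((eP : ℕ) : ZMod n), hePS⟩ := hchord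
  -- step 3 : reach from u + eP to u + d
  have hdS : u + ((d : ℕ) : ZMod n) ∉ (↑S : Set (ZMod n)) := hv'
  have step3 : (G.induce (↑S : Set (ZMod n))ᶜ).Reachable
      ⟨u + ((eP : ℕ) : ZMod n), hePS⟩ ⟨u + ((d : ℕ) : ZMod n), hdS⟩ := by
    rcases le_or_gt eP d with h | h
    · exact reach_seg G _ m hm hadj u eP d h (by omega) (by omega)
        (fun e he1 he2 => hPmem e (by omega) (by omega)) hePS hdS
    · exact (reach_seg G _ m hm hadj u d eP (by omega) (by omega) (by omega)
        (fun e he1 he2 => hPmem e (by omega) (by omega)) hdS hePS).symm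
  exact (step1.trans step2.reachable).trans step3

end Infra

section Adj
variable {n : ℕ} [NeZero n]

lemma self_ne_add_cast {x : ZMod n} {k : ℕ} (hk1 : 1 ≤ k) (hk2 : k < n) :
    x ≠ x + (k : ZMod n) := by
  intro h
  exact cast_ne_zero_of hk1 hk2 (by
    have := h.symm
    rwa [add_eq_left] at this)

lemma harary_step {r : ℕ} (hr : 2 ≤ r) (hrn : r < n) (x : ZMod n) (k : ℕ)
    (hk1 : 1 ≤ k) (hk : k ≤ r / 2) : (harary r n).Adj x (x + (k : ZMod n)) := by
  have hkn : k < n := by omega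
  have hne : x ≠ x + (k : ZMod n) := self_ne_add_cast hk1 hkn
  unfold harary
  split_ifs with h1 h2
  · rw [fromRel_adj]
    exact ⟨hne, Or.inl ⟨k, hk1, hk, rfl⟩⟩
  · rw [fromRel_adj]
    refine ⟨hne, Or.inl (Or.inl ⟨k, hk1, ?_, rfl⟩)⟩
    rcases Nat.even_or_odd r with he | ho
    · exact absurd he h1
    · obtain ⟨j, hj⟩ := ho; omega
  · rw [fromRel_adj]
    refine ⟨hne, Or.inl (Or.inl ⟨k, hk1, ?_, rfl⟩)⟩
    rcases Nat.even_or_odd r with he | ho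
    · exact absurd he h1
    · obtain ⟨j, hj⟩ := ho; omega

lemma harary_chord_evenn {r : ℕ} (ho : ¬Even r) (hne : Even n) (hn2 : 2 ≤ n) (x : ZMod n) :
    (harary r n).Adj x (x + ((n / 2 : ℕ) : ZMod n)) := by
  have h1 : 1 ≤ n / 2 := by omega
  have h2 : n / 2 < n := by omega
  unfold harary
  rw [if_neg ho, if_pos hne, fromRel_adj]
  exact ⟨self_ne_add_cast h1 h2, Or.inl (Or.inr rfl)⟩

lemma cast_val_eq (x : ZMod n) : ((x.val : ℕ) : ZMod n) = x :=
  ZMod.natCast_rightInverse x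

lemma harary_chord_oddn {r : ℕ} (ho : ¬Even r) (hno : ¬Even n) (hn3 : 3 ≤ n) (x : ZMod n) :
    ∃ c : ℕ, (c = (n - 1) / 2 ∨ c = (n + 1) / 2) ∧ (harary r n).Adj x (x + (c : ZMod n)) := by
  have hnodd : ∃ j, n = 2 * j + 1 := by
    rcases Nat.even_or_odd n with he | hq
    · exact absurd he hno
    · obtain ⟨j, hj⟩ := hq; exact ⟨j, hj⟩
  obtain ⟨j, hj⟩ := hnodd
  have hxval : x.val < n := ZMod.val_lt x
  have hsum : (((n + 1) / 2 + (n - 1) / 2 : ℕ) : ZMod n) = 0 := by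
    have : ((n + 1) / 2 + (n - 1) / 2 : ℕ) = n := by omega
    rw [this, ZMod.natCast_self]
  rcases Nat.eq_zero_or_pos x.val with h0 | hpos
  · -- x = 0 : partner of 0 is (n+1)/2, chord from (n+1)/2 to 0
    refine ⟨(n + 1) / 2, Or.inr rfl, ?_⟩
    have hc1 : 1 ≤ (n + 1) / 2 := by omega
    have hc2 : (n + 1) / 2 < n := by omega
    have hx0 : x = 0 := by
      rw [← cast_val_eq x, h0, Nat.cast_zero]
    unfold harary
    rw [if_neg ho, if_neg hno, fromRel_adj]
    refine ⟨self_ne_add_cast hc1 hc2, Or.inr (Or.inr ⟨(n + 1) / 2, hc1, le_refl _, ?_, ?_⟩)⟩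
    · rw [hx0, zero_add]
    · rw [add_assoc, ← Nat.cast_add, hsum, add_zero]
  · rcases le_or_gt x.val ((n + 1) / 2) with hle | hgt
    · -- 1 ≤ x.val ≤ (n+1)/2 : partner is x + (n-1)/2
      refine ⟨(n - 1) / 2, Or.inl rfl, ?_⟩
      have hc1 : 1 ≤ (n - 1) / 2 := by omega
      have hc2 : (n - 1) / 2 < n := by omega
      unfold harary
      rw [if_neg ho, if_neg hno, fromRel_adj]
      exact ⟨self_ne_add_cast hc1 hc2,
        Or.inl (Or.inr ⟨x.val, hpos, hle, (cast_val_eq x).symm, rfl⟩)⟩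
    · -- x.val > (n+1)/2 : partner is x + (n+1)/2, chord back to x
      refine ⟨(n + 1) / 2, Or.inr rfl, ?_⟩
      have hc1 : 1 ≤ (n + 1) / 2 := by omega
      have hc2 : (n + 1) / 2 < n := by omega
      unfold harary
      rw [if_neg ho, if_neg hno, fromRel_adj]
      refine ⟨self_ne_add_cast hc1 hc2, Or.inr (Or.inr ⟨x.val - (n - 1) / 2, by omega, by omega,
        ?_, ?_⟩)⟩
      · -- x + (n+1)/2 = (x.val - (n-1)/2 : ZMod n)
        have h1 : ((x.val - (n - 1) / 2 + n : ℕ) : ZMod n)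
            = ((x.val + (n + 1) / 2 : ℕ) : ZMod n) := by
          congr 1; omega
        rw [Nat.cast_add, ZMod.natCast_self, add_zero] at h1
        rw [h1, Nat.cast_add, cast_val_eq]
      · rw [add_assoc, ← Nat.cast_add, hsum, add_zero]

end Adj

section Lower
variable {n : ℕ} [NeZero n]

lemma cast_sub_n {a : ℕ} (h : n ≤ a) : ((a - n : ℕ) : ZMod n) = (a : ZMod n) := by
  have : ((a - n + n : ℕ) : ZMod n) = (a : ZMod n) := by congr 1; omega
  rwa [Nat.cast_add, ZMod.natCast_self, add_zero] at this

lemma adj_offset {G : SimpleGraph (ZMod n)} {x : ZMod n} {a c b : ℕ}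
    (h : G.Adj (x + (a : ZMod n)) ((x + (a : ZMod n)) + (c : ZMod n)))
    (hb : b = a + c ∨ b + n = a + c) :
    G.Adj (x + (a : ZMod n)) (x + (b : ZMod n)) := by
  have he : x + (b : ZMod n) = (x + (a : ZMod n)) + (c : ZMod n) := by
    rcases hb with rfl | hb
    · push_cast; ring
    · have h2 : ((b + n : ℕ) : ZMod n) = ((a + c : ℕ) : ZMod n) := by rw [hb]
      rw [Nat.cast_add, ZMod.natCast_self, add_zero, Nat.cast_add] at h2
      rw [h2]; ring
  rwa [he]

lemma harary_lower {r : ℕ} (hr : 2 ≤ r) (hrn : r < n) (S : Finset (ZMod n))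
    (hcard : S.card ≤ r - 1) :
    (SimpleGraph.induce ((↑S : Set (ZMod n))ᶜ) (harary r n)).Connected := by
  have hn1 : 1 ≤ n := Nat.pos_of_ne_zero (NeZero.ne n)
  set m := r / 2 with hmdef
  have hm : 1 ≤ m := by omega
  have hadj : ∀ (x : ZMod n) (k : ℕ), 1 ≤ k → k ≤ m → (harary r n).Adj x (x + (k : ZMod n)) :=
    fun x k h1 h2 => harary_step hr hrn x k h1 h2
  rw [connected_iff]
  constructor
  · rintro ⟨x, hx⟩ ⟨y, hy⟩
    by_cases hxy : x = y
    · exact (Subtype.ext hxy : (⟨x, hx⟩ : ((↑S : Set (ZMod n))ᶜ : Set (ZMod n))) = ⟨y, hy⟩) ▸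
        Reachable.refl _
    · set d := (y - x).val with hddef
      have hdn : d < n := ZMod.val_lt _
      have hd1 : 1 ≤ d := by
        rcases Nat.eq_zero_or_pos d with h0 | h; swap; · exact h
        exfalso
        have : ((d : ℕ) : ZMod n) = 0 := by rw [h0, Nat.cast_zero]
        rw [hddef, cast_val_eq] at this
        have hyx : y = x := by linear_combination this
        exact hxy hyx.symm
      have hyd : x + ((d : ℕ) : ZMod n) = y := by
        rw [hddef, cast_val_eq]; ring
      have hx' : x ∉ (↑S : Set (ZMod n)) := hx
      have hy' : y ∉ (↑S : Set (ZMod n)) := hy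
      have hv' : x + ((d : ℕ) : ZMod n) ∉ (↑S : Set (ZMod n)) := by rwa [hyd]
      have hcard2 : S.card ≤ 2 * m := by omega
      rcases engine (harary r n) S m hm hcard2 hadj x d hd1 hdn (by simpa using hx')
          (by simpa using hv') hx' hv' with hreach | ⟨t, t', ht1, htm, ht1', htm', hScard, hmem⟩
      · convert hreach using 2
        exact hyd.symm
      · rcases Nat.even_or_odd r with heR | hoR
        · -- even r : contradiction, |S| = 2m = r > r - 1
          exfalso
          obtain ⟨j, hj⟩ := heR
          omega
        · obtain ⟨j, hjr⟩ := hoR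
          have hmj : 2 * m + 1 = r := by omega
          have honR : ¬Even r := by rintro ⟨k, hk⟩; omega
          -- get the chord constant facts
          have key : (harary r n).Reachable (x) (x + ((d : ℕ) : ZMod n)) → True := fun _ => trivial
          -- unified chord facts
          have hcget : ∀ z : ZMod n, ∃ c : ℕ,
              ((2 * c = n ∧ 2 * m + 2 ≤ n) ∨ ((2 * c + 1 = n ∨ 2 * c = n + 1) ∧ 2 * m + 3 ≤ n)) ∧
              (harary r n).Adj z (z + (c : ZMod n)) := by
            intro z
            rcases Nat.even_or_odd n with heN | hoN
            · obtain ⟨h2, hh2⟩ := heN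
              refine ⟨n / 2, Or.inl ⟨by omega, by omega⟩, ?_⟩
              exact harary_chord_evenn honR ⟨h2, hh2⟩ (by omega) z
            · obtain ⟨j2, hj2⟩ := hoN
              obtain ⟨c, hc, hadjc⟩ := harary_chord_oddn honR
                (by rw [Nat.even_iff]; omega) (by omega) z
              exact ⟨c, Or.inr ⟨by omega, by omega⟩, hadjc⟩
          rcases le_or_gt (2 * d + 2 * t') (n + 2 * t) with hq | hp
          · -- gap Q at least as large : chord from start of P
            obtain ⟨c, hcf, hadjc⟩ := hcget (x + ((t + m : ℕ) : ZMod n))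
            -- target offset
            by_cases hw : t + m + c < n
            · have hb : (harary r n).Adj (x + ((t + m : ℕ) : ZMod n))
                  (x + ((t + m + c : ℕ) : ZMod n)) := adj_offset hadjc (Or.inl rfl)
              have := bridge (harary r n) S m hm hadj x d t t' hd1 hdn ht1 htm ht1' htm' hmem
                (t + m) (t + m + c) le_rfl (by omega) (Or.inr ⟨by omega, hw⟩) hb.symm hx' hv'
              convert this using 2
              exact hyd.symm
            · have hb : (harary r n).Adj (x + ((t + m : ℕ) : ZMod n))
                  (x + ((t + m + c - n : ℕ) : ZMod n)) := adj_offset hadjc (Or.inr (by omega))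
              have := bridge (harary r n) S m hm hadj x d t t' hd1 hdn ht1 htm ht1' htm' hmem
                (t + m) (t + m + c - n) le_rfl (by omega) (Or.inl (by omega)) hb.symm hx' hv'
              convert this using 2
              exact hyd.symm
          · -- gap P larger : chord from start of Q
            -- base offset
            by_cases hw0 : d + t' + m < n
            · obtain ⟨c, hcf, hadjc⟩ := hcget (x + ((d + t' + m : ℕ) : ZMod n))
              have hwrap : ¬ (d + t' + m + c < n) := by omega
              have hb : (harary r n).Adj (x + ((d + t' + m : ℕ) : ZMod n))
                  (x + ((d + t' + m + c - n : ℕ) : ZMod n)) :=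
                adj_offset hadjc (Or.inr (by omega))
              have := bridge (harary r n) S m hm hadj x d t t' hd1 hdn ht1 htm ht1' htm' hmem
                (d + t' + m + c - n) (d + t' + m) (by omega) (by omega)
                (Or.inr ⟨le_rfl, hw0⟩) hb hx' hv'
              convert this using 2
              exact hyd.symm
            · -- d + t' + m = n, base is x itself (offset 0)
              have hdtm : d + t' + m = n := by omega
              obtain ⟨c, hcf, hadjc⟩ := hcget (x + ((0 : ℕ) : ZMod n))
              have hb : (harary r n).Adj (x + ((0 : ℕ) : ZMod n)) (x + ((c : ℕ) : ZMod n)) :=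
                adj_offset hadjc (Or.inl (by omega))
              have := bridge (harary r n) S m hm hadj x d t t' hd1 hdn ht1 htm ht1' htm' hmem
                c 0 (by omega) (by omega) (Or.inl (by omega)) hb hx' hv'
              convert this using 2
              exact hyd.symm
  · -- nonempty
    have : Sᶜ.Nonempty := by
      apply Finset.card_pos.mp
      rw [Finset.card_compl, ZMod.card]
      omega
    obtain ⟨x, hx⟩ := this
    exact ⟨⟨x, by simpa using (Finset.mem_compl.mp hx)⟩⟩

end Lower

section Upper
variable {n : ℕ} [NeZero n]

lemma harary_upper {r : ℕ} (hr : 2 ≤ r) (hrn : r + 1 < n) :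
    ∃ S : Finset (ZMod n), S.card = r ∧
      ¬ (SimpleGraph.induce ((↑S : Set (ZMod n))ᶜ) (harary r n)).Connected := by
  classical
  set m := r / 2 with hmdef
  have hm : 1 ≤ m := by omega
  set E : Finset ℕ := if Even r then ∅ else (if Even n then {n / 2} else {(n + 1) / 2}) with hE
  set T : Finset ℕ := (Finset.Icc 1 m ∪ Finset.Icc (n - m) (n - 1)) ∪ E with hT
  have hrparity : (Even r ∧ 2 * m = r) ∨ (¬ Even r ∧ 2 * m + 1 = r) := by
    rcases Nat.even_or_odd r with he | ho
    · obtain ⟨k, hk⟩ := he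
      exact Or.inl ⟨⟨k, hk⟩, by omega⟩
    · obtain ⟨k, hk⟩ := ho
      exact Or.inr ⟨by rintro ⟨l, hl⟩; omega, by omega⟩
  have h2m : 2 * m ≤ r := by omega
  have hEbound : ∀ e ∈ E, m < e ∧ e < n - m := by
    intro e he
    rw [hE] at he
    split_ifs at he with h1 h2
    · simp at he
    · simp only [Finset.mem_singleton] at he
      have : 2 * m + 1 = r := by tauto
      obtain ⟨k, hk⟩ := h2
      omega
    · simp only [Finset.mem_singleton] at he
      have : 2 * m + 1 = r := by tauto
      have : ¬ (2 ∣ n) := by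
        intro hd
        exact h2 (even_iff_two_dvd.mpr hd)
      omega
  have hTbound : ∀ a ∈ T, 1 ≤ a ∧ a < n := by
    intro a ha
    rw [hT] at ha
    simp only [Finset.mem_union, Finset.mem_Icc] at ha
    rcases ha with (h | h) | h
    · omega
    · omega
    · have := hEbound a h; omega
  have hdisj1 : Disjoint (Finset.Icc 1 m) (Finset.Icc (n - m) (n - 1)) := by
    rw [Finset.disjoint_left]
    intro a ha hb
    simp only [Finset.mem_Icc] at ha hb
    omega
  have hdisj2 : Disjoint (Finset.Icc 1 m ∪ Finset.Icc (n - m) (n - 1)) E := by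
    rw [Finset.disjoint_left]
    intro a ha hb
    have := hEbound a hb
    simp only [Finset.mem_union, Finset.mem_Icc] at ha
    omega
  have hTcard : T.card = r := by
    rw [hT, Finset.card_union_of_disjoint hdisj2, Finset.card_union_of_disjoint hdisj1,
      Nat.card_Icc, Nat.card_Icc]
    have hEcard : E.card = r - 2 * m := by
      rw [hE]
      rcases hrparity with ⟨he, h2⟩ | ⟨ho, h2⟩
      · rw [if_pos he]; simp; omega
      · rw [if_neg ho]
        split_ifs <;> simp <;> omega
    rw [hEcard]
    omega
  set S : Finset (ZMod n) := T.image (Nat.cast : ℕ → ZMod n) with hS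
  have hScard : S.card = r := by
    rw [hS, Finset.card_image_of_injOn, hTcard]
    intro a ha b hb hab
    exact cast_inj_lt (hTbound a ha).2 (hTbound b hb).2 hab
  have hmemS : ∀ a ∈ T, ((a : ℕ) : ZMod n) ∈ S := by
    intro a ha
    rw [hS]
    exact Finset.mem_image.mpr ⟨a, ha, rfl⟩
  have hneg : ∀ k : ℕ, 1 ≤ k → k ≤ n → (-(k : ZMod n)) = ((n - k : ℕ) : ZMod n) := by
    intro k h1 h2
    have : ((n - k + k : ℕ) : ZMod n) = 0 := by
      have : (n - k + k : ℕ) = n := by omega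
      rw [this, ZMod.natCast_self]
    rw [Nat.cast_add] at this
    linear_combination -this
  -- all neighbours of 0 lie in S
  have hnbr : ∀ z : ZMod n, (harary r n).Adj 0 z → z ∈ S := by
    intro z hz
    unfold harary at hz
    split_ifs at hz with h1 h2 <;> rw [fromRel_adj] at hz <;>
      obtain ⟨hne, hrel⟩ := hz
    · rcases hrel with ⟨k, hk1, hk2, hzk⟩ | ⟨k, hk1, hk2, hzk⟩
      · rw [hzk, zero_add]
        apply hmemS
        rw [hT]
        simp only [Finset.mem_union, Finset.mem_Icc]
        left; left; omega
      · have hz' : z = -(k : ZMod n) := by linear_combination -hzk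
        rw [hz', hneg k hk1 (by omega)]
        apply hmemS
        rw [hT]
        simp only [Finset.mem_union, Finset.mem_Icc]
        left; right; omega
    · have hm2 : 2 * m + 1 = r := by
        rcases hrparity with ⟨he, _⟩ | ⟨_, h2'⟩
        · exact absurd he h1
        · exact h2'
      have hmr : (r - 1) / 2 = m := by omega
      rcases hrel with (⟨k, hk1, hk2, hzk⟩ | hzk) | (⟨k, hk1, hk2, hzk⟩ | hzk)
      · rw [hzk, zero_add]
        apply hmemS; rw [hT]
        simp only [Finset.mem_union, Finset.mem_Icc]
        left; left; omega
      · rw [hzk, zero_add]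
        apply hmemS; rw [hT, hE, if_neg h1, if_pos h2]
        simp
      · have hz' : z = -(k : ZMod n) := by linear_combination -hzk
        rw [hz', hneg k hk1 (by omega)]
        apply hmemS; rw [hT]
        simp only [Finset.mem_union, Finset.mem_Icc]
        left; right; omega
      · have hz' : z = -((n / 2 : ℕ) : ZMod n) := by linear_combination -hzk
        obtain ⟨k, hk⟩ := h2
        have : n - n / 2 = n / 2 := by omega
        rw [hz', hneg (n / 2) (by omega) (by omega), this]
        apply hmemS; rw [hT, hE, if_neg h1, if_pos ⟨k, hk⟩]
        simp
    · have hm2 : 2 * m + 1 = r := by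
        rcases hrparity with ⟨he, _⟩ | ⟨_, h2'⟩
        · exact absurd he h1
        · exact h2'
      have hnodd : ¬ (2 ∣ n) := fun hd => h2 (even_iff_two_dvd.mpr hd)
      rcases hrel with (⟨k, hk1, hk2, hzk⟩ | ⟨k, hk1, hk2, h0k, hzk⟩) |
        (⟨k, hk1, hk2, hzk⟩ | ⟨k, hk1, hk2, hzk, h0k⟩)
      · rw [hzk, zero_add]
        apply hmemS; rw [hT]
        simp only [Finset.mem_union, Finset.mem_Icc]
        left; left; omega
      · exact absurd h0k.symm (cast_ne_zero_of hk1 (by omega))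
      · have hz' : z = -(k : ZMod n) := by linear_combination -hzk
        rw [hz', hneg k hk1 (by omega)]
        apply hmemS; rw [hT]
        simp only [Finset.mem_union, Finset.mem_Icc]
        left; right; omega
      · have hz' : z = -(((n - 1) / 2 : ℕ) : ZMod n) := by linear_combination -h0k
        have : n - (n - 1) / 2 = (n + 1) / 2 := by omega
        rw [hz', hneg ((n - 1) / 2) (by omega) (by omega), this]
        apply hmemS; rw [hT, hE, if_neg h1, if_neg h2]
        simp
  -- 0 is not in S
  have h0S : (0 : ZMod n) ∉ S := by
    intro h0
    rw [hS] at h0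
    obtain ⟨a, ha, ha0⟩ := Finset.mem_image.mp h0
    exact cast_ne_zero_of (hTbound a ha).1 (hTbound a ha).2 ha0
  refine ⟨S, hScard, ?_⟩
  intro hcon
  -- there is a vertex other than 0 outside S
  have : ((insert (0 : ZMod n) S)ᶜ).Nonempty := by
    apply Finset.card_pos.mp
    rw [Finset.card_compl, ZMod.card]
    have := Finset.card_insert_le (0 : ZMod n) S
    omega
  obtain ⟨w, hw⟩ := this
  rw [Finset.mem_compl, Finset.mem_insert] at hw
  push_neg at hw
  have h0c : (0 : ZMod n) ∈ (↑S : Set (ZMod n))ᶜ := by simpa using h0S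
  have hwc : w ∈ (↑S : Set (ZMod n))ᶜ := by simpa using hw.2
  have hreach := hcon.preconnected ⟨0, h0c⟩ ⟨w, hwc⟩
  obtain ⟨p⟩ := hreach
  cases p with
  | nil => exact hw.1 rfl
  | cons h q =>
      rename_i b
      have hb : (harary r n).Adj 0 b.val := h
      have hb2 := b.2
      rw [Set.mem_compl_iff, Finset.mem_coe] at hb2
      exact hb2 (hnbr b.val hb)

end Upper

theorem harary_connectivity (n r : ℕ) [NeZero n] (hr : 2 ≤ r) (hrn : r < n) :
    vertexConnectivity (harary r n) = r := by
  unfold vertexConnectivity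
  apply le_antisymm
  · apply Nat.sInf_le
    rcases lt_or_ge (r + 1) n with hlt | hge
    · left
      obtain ⟨S, hSc, hSd⟩ := harary_upper hr hlt
      exact ⟨S, hSc, hSd⟩
    · right
      have : r = n - 1 := by omega
      simp only [Set.mem_singleton_iff, ZMod.card]
      omega
  · apply le_csInf
    · exact ⟨Fintype.card (ZMod n) - 1, Or.inr rfl⟩
    · intro b hb
      rcases hb with ⟨S, hSc, hSd⟩ | hb
      · by_contra hbr
        push_neg at hbr
        exact hSd (harary_lower hr hrn S (by omega))
      · simp only [Set.mem_singleton_iff, ZMod.card] at hb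
        omega
end

section
/- For any tree T on n ≥ 3 vertices with p leaves, adding p-1 edges joining consecutive leaves (in any fixed order x_1,...,x_p) produces a 2-edge-connected graph provided T is not a star; in particular the resulting graph contains no bridge incident to any former leaf. -/
/-! A tree edge `ab` is not a bridge: a longest path leaving `a` away from `b` ends at a leaf, and
so does one leaving `b` away from `a`; these two leaves are joined through the added edges, none of
which is `ab` because no two leaves of a tree on at least three vertices are adjacent. An added
edge is not a bridge because the tree survives its removal. -/

open SimpleGraph Finset
open scoped Classical

namespace SimpleGraph

variable {V : Type*} {G T H : SimpleGraph V} {s : Set (Sym2 V)} {a b u v : V}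

lemma exists_isPath_forall_adj_mem_support [Finite V] (G : SimpleGraph V) (a : V) :
    ∃ (w : V) (p : G.Walk a w), p.IsPath ∧ ∀ ⦃u⦄, G.Adj w u → u ∈ p.support := by
  have := Fintype.ofFinite V
  let lengths := {n | ∃ (w : V) (p : G.Walk a w), p.IsPath ∧ p.length = n}
  have hfin : lengths.Finite := (Set.finite_lt_nat (Fintype.card V)).subset
    fun n ⟨_, _, hp, hn⟩ ↦ hn ▸ hp.length_lt
  obtain ⟨_, ⟨w, p, hp, rfl⟩, hmax⟩ := hfin.exists_maximal ⟨0, a, .nil, .nil, rfl⟩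
  refine ⟨w, p, hp, fun u hu ↦ by_contra fun hup ↦ ?_⟩
  have := hmax ⟨u, p.concat hu, hp.concat hup hu, rfl⟩
  simp at this

lemma IsAcyclic.degree_eq_one_of_forall_adj_mem_support [Fintype V] (hG : G.IsAcyclic)
    {w : V} {p : G.Walk u w} (hp : p.IsPath) (huw : u ≠ w)
    (hadj : ∀ ⦃v⦄, G.Adj w v → v ∈ p.support) : G.degree w = 1 :=
  degree_eq_one_iff_existsUnique_adj.mpr ⟨p.penultimate,
    (p.adj_penultimate (p.not_nil_of_ne huw)).symm,
    fun _ hv ↦ hG.eq_penultimate_of_adj_end hp hv (hadj hv)⟩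

lemma IsAcyclic.exists_degree_eq_one_reachable_deleteEdges [Fintype V] (hT : T.IsAcyclic)
    (hab : T.Adj a b) :
    ∃ ℓ, T.degree ℓ = 1 ∧ (T.deleteEdges {s(a, b)}).Reachable a ℓ := by
  obtain ⟨w, p, hp, hmax⟩ := (T.deleteEdges {s(a, b)}).exists_isPath_forall_adj_mem_support a
  have hbridge : ¬ (T.deleteEdges {s(a, b)}).Reachable a b :=
    isBridge_iff.mp (isAcyclic_iff_forall_adj_isBridge.mp hT hab)
  have hb : b ∉ p.support := fun hb ↦ hbridge ⟨p.takeUntil b hb⟩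
  -- prepending the deleted edge puts every `T`-neighbour of `w` on a path of `T`
  let q : T.Walk b w := .cons hab.symm (p.mapLe (deleteEdges_le _))
  have hq : q.IsPath := by simp [q, hp, hb]
  refine ⟨w, hT.degree_eq_one_of_forall_adj_mem_support hq ?_ fun u hu ↦ ?_, ⟨p⟩⟩
  · rintro rfl
    exact hbridge ⟨p⟩
  · by_cases he : s(w, u) = s(a, b)
    · rcases Sym2.eq_iff.mp he with ⟨-, rfl⟩ | ⟨-, rfl⟩
      · exact q.start_mem_support
      · simp [q]
    · simpa [q] using Or.inr (hmax (by simp [hu, he]))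

lemma Preconnected.card_le_two_of_adj_of_degree_eq_one [Fintype V] (hG : G.Preconnected)
    (huv : G.Adj u v) (hu : G.degree u = 1) (hv : G.degree v = 1) : Fintype.card V ≤ 2 := by
  have hclosed : ∀ ⦃w w'⦄, G.Adj w w' → w = u ∨ w = v → w' = u ∨ w' = v := by
    rintro w w' h (rfl | rfl)
    · exact .inr ((degree_eq_one_iff_existsUnique_adj.mp hu).unique h huv)
    · exact .inl ((degree_eq_one_iff_existsUnique_adj.mp hv).unique h huv.symm)
  have hall : ∀ w, w = u ∨ w = v := fun w ↦ by
    induction (reachable_iff_reflTransGen u w).mp (hG u w) with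
    | refl => exact .inl rfl
    | tail _ h ih => exact hclosed h ih
  calc Fintype.card V = (univ : Finset V).card := card_univ.symm
    _ ≤ ({u, v} : Finset V).card := card_le_card fun w _ ↦ by simpa using hall w
    _ ≤ 2 := card_le_two

lemma le_deleteEdges_iff : G ≤ H.deleteEdges s ↔ G ≤ H ∧ Disjoint G.edgeSet s :=
  le_sdiff.trans (and_congr_right' (disjoint_fromEdgeSet _ _))

lemma not_isBridge_sup_of_adj_right (hT : T.Preconnected) (hdisj : Disjoint T H)
    (hab : H.Adj a b) : ¬ (T ⊔ H).IsBridge s(a, b) := by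
  have hle : T ≤ (T ⊔ H).deleteEdges {s(a, b)} := le_deleteEdges_iff.mpr
    ⟨le_sup_left, Set.disjoint_singleton_right.mpr fun h ↦ disjoint_left.mp hdisj _ _ h hab⟩
  exact not_not.mpr ((hT a b).mono hle)

lemma IsAcyclic.not_isBridge_sup_of_adj_left [Fintype V] (hT : T.IsAcyclic)
    (hdisj : Disjoint T H) (hH : ∀ u v, T.degree u = 1 → T.degree v = 1 → H.Reachable u v)
    (hab : T.Adj a b) : ¬ (T ⊔ H).IsBridge s(a, b) := by
  obtain ⟨ℓa, hℓa, ha⟩ := hT.exists_degree_eq_one_reachable_deleteEdges hab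
  obtain ⟨ℓb, hℓb, hb⟩ := hT.exists_degree_eq_one_reachable_deleteEdges hab.symm
  rw [Sym2.eq_swap] at hb
  have hTle : T.deleteEdges {s(a, b)} ≤ (T ⊔ H).deleteEdges {s(a, b)} :=
    deleteEdges_mono le_sup_left
  have hHle : H ≤ (T ⊔ H).deleteEdges {s(a, b)} := le_deleteEdges_iff.mpr
    ⟨le_sup_right, Set.disjoint_singleton_right.mpr fun h ↦ disjoint_left.mp hdisj _ _ hab h⟩
  exact not_not.mpr <|
    (ha.mono hTle).trans <| ((hH _ _ hℓa hℓb).mono hHle).trans (hb.mono hTle).symm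

theorem IsTree.forall_not_isBridge_sup [Fintype V] (hT : T.IsTree) (hn : 3 ≤ Fintype.card V)
    (hHleaf : ∀ ⦃u v⦄, H.Adj u v → T.degree u = 1)
    (hH : ∀ u v, T.degree u = 1 → T.degree v = 1 → H.Reachable u v) :
    ∀ e ∈ (T ⊔ H).edgeSet, ¬ (T ⊔ H).IsBridge e := by
  have hdisj : Disjoint T H := disjoint_left.mpr fun u v hT' hH' ↦ by
    have := hT.preconnected.card_le_two_of_adj_of_degree_eq_one hT' (hHleaf hH') (hHleaf hH'.symm)
    omega
  rintro ⟨a, b⟩ (hab | hab)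
  · exact hT.isAcyclic.not_isBridge_sup_of_adj_left hdisj hH hab
  · exact not_isBridge_sup_of_adj_right hT.preconnected hdisj hab

def consecutivePairs {p : ℕ} (x : Fin p → V) : Set (Sym2 V) :=
  {e | ∃ (i : ℕ) (h : i + 1 < p), e = s(x ⟨i, Nat.lt_of_succ_lt h⟩, x ⟨i + 1, h⟩)}

lemma mem_range_of_adj_fromEdgeSet_consecutivePairs {p : ℕ} {x : Fin p → V}
    (h : (fromEdgeSet (consecutivePairs x)).Adj u v) : u ∈ Set.range x := by
  obtain ⟨⟨i, _, he⟩, -⟩ := h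
  rcases Sym2.eq_iff.mp he with ⟨rfl, -⟩ | ⟨rfl, -⟩ <;> exact Set.mem_range_self _

lemma reachable_fromEdgeSet_consecutivePairs {p : ℕ} (x : Fin p → V) (i j : Fin p) :
    (fromEdgeSet (consecutivePairs x)).Reachable (x i) (x j) := by
  have h0 : 0 < p := i.pos
  suffices h : ∀ k (hk : k < p),
      (fromEdgeSet (consecutivePairs x)).Reachable (x ⟨0, h0⟩) (x ⟨k, hk⟩) from
    (h i i.2).symm.trans (h j j.2)
  intro k
  induction k with
  | zero => exact fun _ ↦ .rfl
  | succ k ih =>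
    intro hk
    refine (ih (by omega)).trans ?_
    by_cases hne : x ⟨k, by omega⟩ = x ⟨k + 1, hk⟩
    · exact hne ▸ .rfl
    · exact Adj.reachable ⟨⟨k, hk, rfl⟩, hne⟩

end SimpleGraph

theorem leaf_path_augmentation_two_edge_connected_general {V : Type*} [Fintype V] (T : SimpleGraph V)
    (hT : T.IsTree) (hn : 3 ≤ Fintype.card V) (p : ℕ)
    (x : Fin p → V)
    (hrange : Set.range x = {v : V | T.degree v = 1}) :
    (T ⊔ SimpleGraph.fromEdgeSet
        {e | ∃ (i : ℕ) (h : i + 1 < p),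
          e = s(x ⟨i, Nat.lt_of_succ_lt h⟩, x ⟨i + 1, h⟩)}).Connected ∧
    ∀ e ∈ (T ⊔ SimpleGraph.fromEdgeSet
        {e | ∃ (i : ℕ) (h : i + 1 < p),
          e = s(x ⟨i, Nat.lt_of_succ_lt h⟩, x ⟨i + 1, h⟩)}).edgeSet,
      ¬ (T ⊔ SimpleGraph.fromEdgeSet
        {e | ∃ (i : ℕ) (h : i + 1 < p),
          e = s(x ⟨i, Nat.lt_of_succ_lt h⟩, x ⟨i + 1, h⟩)}).IsBridge e := by
  have hleaf : ∀ i, T.degree (x i) = 1 := fun i ↦ hrange.subset (Set.mem_range_self i)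
  refine ⟨hT.connected.mono le_sup_left, hT.forall_not_isBridge_sup hn (fun u _ huv ↦ ?_) ?_⟩
  · obtain ⟨i, rfl⟩ := mem_range_of_adj_fromEdgeSet_consecutivePairs huv
    exact hleaf i
  · intro u v hu hv
    obtain ⟨i, rfl⟩ : u ∈ Set.range x := hrange ▸ hu
    obtain ⟨j, rfl⟩ : v ∈ Set.range x := hrange ▸ hv
    exact reachable_fromEdgeSet_consecutivePairs x i j

theorem leaf_path_augmentation_two_edge_connected {V : Type*} [Fintype V] (T : SimpleGraph V)
    (hT : T.IsTree) (hn : 3 ≤ Fintype.card V) (p : ℕ) (hp : 2 ≤ p)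
    (x : Fin p → V) (hinj : Function.Injective x)
    (hrange : Set.range x = {v : V | T.degree v = 1})
    (hstar : ¬ ∃ c : V, ∀ v : V, v ≠ c → T.Adj c v) :
    (T ⊔ SimpleGraph.fromEdgeSet
        {e | ∃ (i : ℕ) (h : i + 1 < p),
          e = s(x ⟨i, Nat.lt_of_succ_lt h⟩, x ⟨i + 1, h⟩)}).Connected ∧
    ∀ e ∈ (T ⊔ SimpleGraph.fromEdgeSet
        {e | ∃ (i : ℕ) (h : i + 1 < p),
          e = s(x ⟨i, Nat.lt_of_succ_lt h⟩, x ⟨i + 1, h⟩)}).edgeSet,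
      ¬ (T ⊔ SimpleGraph.fromEdgeSet
        {e | ∃ (i : ℕ) (h : i + 1 < p),
          e = s(x ⟨i, Nat.lt_of_succ_lt h⟩, x ⟨i + 1, h⟩)}).IsBridge e :=
  leaf_path_augmentation_two_edge_connected_general T hT hn p x hrange
end

section
/- For n ≥ 5, the graph obtained from the cycle C_n by adding chords {i, (i + ⌊n/2⌋) mod n} for 0 ≤ i ≤ ⌈n/2⌉ - 1 is 3-vertex-connected. -/
open SimpleGraph Finset
open scoped Classical

/-- The cycle on the vertices `0, ..., n-1` of `ZMod n`, with edges `{i, i+1 mod n}`. -/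
def cycleZ (n : ℕ) : SimpleGraph (ZMod n) :=
  SimpleGraph.fromRel (fun i j => j = i + 1)

/-- The chords `{i, (i + ⌊n/2⌋) mod n}` for `0 ≤ i ≤ ⌈n/2⌉ - 1`. -/
def chordsZ (n : ℕ) : SimpleGraph (ZMod n) :=
  SimpleGraph.fromEdgeSet
    {e | ∃ i : ℕ, i < (n + 1) / 2 ∧ e = s((i : ZMod n), ((i + n / 2 : ℕ) : ZMod n))}

namespace CWCaux

variable {n : ℕ} [NeZero n]

lemma cast_inj' {i j : ℕ} (hi : i < n) (hj : j < n)
    (h : ((i : ℕ) : ZMod n) = ((j : ℕ) : ZMod n)) : i = j := by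
  have := congrArg ZMod.val h
  rwa [ZMod.val_cast_of_lt hi, ZMod.val_cast_of_lt hj] at this

lemma off_ne {s t : ℕ} (a : ZMod n) (hs : s < n) (ht : t < n) (hst : s ≠ t) :
    a + (s : ℕ) ≠ a + (t : ℕ) := by
  intro h
  exact hst (cast_inj' hs ht (add_left_cancel h))

lemma add_cast_add (a : ZMod n) (i j : ℕ) :
    a + (i : ℕ) + (j : ℕ) = a + ((i + j : ℕ) : ZMod n) := by
  push_cast; ring

lemma cast_reduce {i : ℕ} (h : n ≤ i) : ((i : ℕ) : ZMod n) = ((i - n : ℕ) : ZMod n) := by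
  have e : i = (i - n) + n := by omega
  rw [e, Nat.cast_add, ZMod.natCast_self, add_zero]
  congr 1
  omega

lemma adj_succ (hn : 5 ≤ n) (u : ZMod n) : (cycleZ n ⊔ chordsZ n).Adj u (u + 1) := by
  left
  rw [cycleZ, SimpleGraph.fromRel_adj]
  refine ⟨?_, Or.inl rfl⟩
  intro h
  have h1 : ((0 : ℕ) : ZMod n) = ((1 : ℕ) : ZMod n) := by
    push_cast
    exact (left_eq_add.mp h).symm
  exact absurd (cast_inj' (by omega) (by omega) h1) (by omega)

lemma adj_chord (hn : 5 ≤ n) (u : ZMod n) :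
    ∃ t : ℕ, (t = n / 2 ∨ t = n - n / 2) ∧ (cycleZ n ⊔ chordsZ n).Adj u (u + (t : ℕ)) := by
  have hvlt := ZMod.val_lt u
  have hne : ∀ t : ℕ, 0 < t → t < n → u ≠ u + (t : ℕ) := by
    intro t h1 h2 h
    have : u + ((0 : ℕ) : ZMod n) = u + ((t : ℕ) : ZMod n) := by simpa using h
    exact absurd (cast_inj' (i := 0) (j := t) (by omega) h2 (add_left_cancel this)) (by omega)
  have euval : ((u.val : ℕ) : ZMod n) = u := by simp [ZMod.natCast_val, ZMod.cast_id]
  by_cases h : u.val < (n + 1) / 2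
  · refine ⟨n / 2, Or.inl rfl, Or.inr ?_⟩
    rw [chordsZ, SimpleGraph.fromEdgeSet_adj]
    refine ⟨⟨u.val, h, ?_⟩, hne (n / 2) (by omega) (by omega)⟩
    rw [Nat.cast_add, euval]
  · refine ⟨n - n / 2, Or.inr rfl, Or.inr ?_⟩
    rw [chordsZ, SimpleGraph.fromEdgeSet_adj]
    have hle : n / 2 ≤ u.val := by omega
    refine ⟨⟨u.val - n / 2, by omega, ?_⟩, hne (n - n / 2) (by omega) (by omega)⟩
    have e1 : ((u.val - n / 2 + n / 2 : ℕ) : ZMod n) = u := by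
      have e : u.val - n / 2 + n / 2 = u.val := by omega
      rw [e, euval]
    have e2 : ((u.val - n / 2 : ℕ) : ZMod n) = u + ((n - n / 2 : ℕ) : ZMod n) := by
      rw [Nat.cast_sub hle, Nat.cast_sub (by omega : n / 2 ≤ n), ZMod.natCast_self, euval]
      ring
    rw [e1, e2]
    exact Sym2.eq_swap

lemma walk_arc (hn : 5 ≤ n) (S : Finset (ZMod n)) (u : ZMod n) (k : ℕ)
    (h : ∀ j, j ≤ k → u + (j : ℕ) ∉ S)
    (p q : ((↑S : Set (ZMod n))ᶜ : Set (ZMod n)))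
    (hp : (p : ZMod n) = u) (hq : (q : ZMod n) = u + (k : ℕ)) :
    (SimpleGraph.induce ((↑S : Set (ZMod n))ᶜ) (cycleZ n ⊔ chordsZ n)).Reachable p q := by
  induction k generalizing q with
  | zero =>
      have e : p = q := Subtype.ext (by rw [hp, hq]; simp)
      rw [e]
  | succ k ih =>
      have hmem : u + ((k : ℕ) : ZMod n) ∈ ((↑S : Set (ZMod n))ᶜ) := by
        simpa using h k (by omega)
      have hr := ih (fun j hj => h j (by omega)) ⟨u + ((k : ℕ) : ZMod n), hmem⟩ rfl
      refine hr.trans (SimpleGraph.Adj.reachable ?_)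
      show (cycleZ n ⊔ chordsZ n).Adj (u + ((k : ℕ) : ZMod n)) (q : ZMod n)
      rw [hq]
      have e : u + (((k + 1 : ℕ) : ℕ) : ZMod n) = (u + ((k : ℕ) : ZMod n)) + 1 := by
        push_cast; ring
      rw [e]
      exact adj_succ hn _

lemma main_reach (hn : 5 ≤ n) (S : Finset (ZMod n)) (hS : S.card ≤ 2)
    (p q : ((↑S : Set (ZMod n))ᶜ : Set (ZMod n))) :
    (SimpleGraph.induce ((↑S : Set (ZMod n))ᶜ) (cycleZ n ⊔ chordsZ n)).Reachable p q := by
  have hx : (p : ZMod n) ∉ S := fun h => p.2 (Finset.mem_coe.mpr h)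
  have hy : (q : ZMod n) ∉ S := fun h => q.2 (Finset.mem_coe.mpr h)
  set x := (p : ZMod n) with hxdef
  set y := (q : ZMod n) with hydef
  by_cases hxy : x = y
  · rw [Subtype.ext hxy]
  · set k := (y - x).val with hkdef
    have hkn : k < n := ZMod.val_lt _
    have hk0 : 0 < k := by
      rcases Nat.eq_zero_or_pos k with h0 | h
      · exfalso
        apply hxy
        have : y - x = 0 := by rwa [← ZMod.val_eq_zero (y - x)]
        have := sub_eq_zero.mp this
        exact this.symm
      · exact h
    have hyx : y = x + ((k : ℕ) : ZMod n) := by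
      have e : ((k : ℕ) : ZMod n) = y - x := by
        rw [hkdef]; simp [ZMod.natCast_val, ZMod.cast_id]
      rw [e]; ring
    by_cases c1 : ∀ j, j ≤ k → x + ((j : ℕ) : ZMod n) ∉ S
    · exact walk_arc hn S x k c1 p q rfl hyx
    push_neg at c1
    obtain ⟨j1, hj1le, hj1S⟩ := c1
    by_cases c2 : ∀ j, j ≤ n - k → y + ((j : ℕ) : ZMod n) ∉ S
    · have hx' : (p : ZMod n) = y + ((n - k : ℕ) : ZMod n) := by
        rw [← hxdef, hyx, Nat.cast_sub (le_of_lt hkn), ZMod.natCast_self]; ring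
      exact (walk_arc hn S y (n - k) c2 q p rfl hx').symm
    push_neg at c2
    obtain ⟨j2', hj2le, hj2S⟩ := c2
    -- basic bounds
    have hj10 : 0 < j1 := by
      rcases Nat.eq_zero_or_pos j1 with h0 | h
      · exfalso; apply hx; simpa [h0] using hj1S
      · exact h
    have hj1k : j1 < k := by
      rcases lt_or_eq_of_le hj1le with h | h
      · exact h
      · exfalso; apply hy; rw [hyx]; rwa [h] at hj1S
    have hj2'0 : 0 < j2' := by
      rcases Nat.eq_zero_or_pos j2' with h0 | h
      · exfalso; apply hy; simpa [h0] using hj2S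
      · exact h
    have hj2'lt : j2' < n - k := by
      rcases lt_or_eq_of_le hj2le with h | h
      · exact h
      · exfalso
        apply hx
        have e : y + ((j2' : ℕ) : ZMod n) = x := by
          rw [h, hyx, Nat.cast_sub (le_of_lt hkn), ZMod.natCast_self]; ring
        rwa [e] at hj2S
    set j2 := k + j2' with hj2def
    set a := x + ((j1 : ℕ) : ZMod n) with hadef
    set b := x + ((j2 : ℕ) : ZMod n) with hbdef
    have hbS : b ∈ S := by
      have e : y + ((j2' : ℕ) : ZMod n) = b := by
        rw [hbdef, hyx, add_cast_add]
      rwa [e] at hj2S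
    have hab : a ≠ b := off_ne x (by omega) (by omega) (by omega)
    have hSeq : S = {a, b} := by
      refine (Finset.eq_of_subset_of_card_le ?_ ?_).symm
      · intro c hc
        simp only [Finset.mem_insert, Finset.mem_singleton] at hc
        rcases hc with rfl | rfl
        · exact hj1S
        · exact hbS
      · rw [Finset.card_insert_of_notMem (by simp [hab]), Finset.card_singleton]
        exact hS
    have mem_S : ∀ c : ZMod n, c ∈ S ↔ c = a ∨ c = b := by
      intro c; rw [hSeq]; simp
    set d := j2 - j1 with hddef
    have hd2 : 2 ≤ d := by omega
    have hdn : d ≤ n - 2 := by omega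
    have hbd : b = a + ((d : ℕ) : ZMod n) := by
      rw [hadef, hbdef, add_cast_add]
      congr 2
      omega
    have hnotin : ∀ s : ℕ, 0 < s → s < n → s ≠ d → a + ((s : ℕ) : ZMod n) ∉ S := by
      intro s h1 h2 h3 hmem
      rw [mem_S] at hmem
      rcases hmem with h | h
      · have e : a + ((s : ℕ) : ZMod n) = a + ((0 : ℕ) : ZMod n) := by simpa using h
        exact off_ne a h2 (by omega) (by omega) e
      · rw [hbd] at h
        exact off_ne a h2 (by omega) h3 h
    have harc : ∀ s1 s2 : ℕ, 0 < s1 → s1 ≤ s2 → s2 < n → (∀ j, s1 ≤ j → j ≤ s2 → j ≠ d) →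
        ∀ (p' q' : ((↑S : Set (ZMod n))ᶜ : Set (ZMod n))),
          (p' : ZMod n) = a + ((s1 : ℕ) : ZMod n) → (q' : ZMod n) = a + ((s2 : ℕ) : ZMod n) →
          (SimpleGraph.induce ((↑S : Set (ZMod n))ᶜ) (cycleZ n ⊔ chordsZ n)).Reachable p' q' := by
      intro s1 s2 h1 h12 h2 hnd p' q' hp' hq'
      apply walk_arc hn S (a + ((s1 : ℕ) : ZMod n)) (s2 - s1) ?_ p' q' hp' ?_
      · intro j hj
        rw [add_cast_add]
        exact hnotin (s1 + j) (by omega) (by omega) (hnd _ (by omega) (by omega))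
      · rw [hq', add_cast_add a s1 (s2 - s1)]
        have e : s1 + (s2 - s1) = s2 := by omega
        rw [e]
    have key : ∃ sw sv : ℕ, 0 < sw ∧ sw < d ∧ d < sv ∧ sv < n ∧
        (cycleZ n ⊔ chordsZ n).Adj (a + ((sw : ℕ) : ZMod n)) (a + ((sv : ℕ) : ZMod n)) := by
      by_cases hcase : d ≤ n / 2
      · obtain ⟨t, ht, hadj⟩ := adj_chord hn (a + ((1 : ℕ) : ZMod n))
        rcases ht with rfl | rfl
        · rw [add_cast_add a 1 (n / 2)] at hadj
          exact ⟨1, 1 + n / 2, by omega, by omega, by omega, by omega, hadj⟩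
        · rw [add_cast_add a 1 (n - n / 2)] at hadj
          exact ⟨1, 1 + (n - n / 2), by omega, by omega, by omega, by omega, hadj⟩
      · obtain ⟨t, ht, hadj⟩ := adj_chord hn (a + ((d + 1 : ℕ) : ZMod n))
        rcases ht with rfl | rfl
        · rw [add_cast_add a (d + 1) (n / 2),
            cast_reduce (by omega : n ≤ d + 1 + n / 2)] at hadj
          exact ⟨d + 1 + n / 2 - n, d + 1, by omega, by omega, by omega, by omega, hadj.symm⟩
        · rw [add_cast_add a (d + 1) (n - n / 2),
            cast_reduce (by omega : n ≤ d + 1 + (n - n / 2))] at hadj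
          exact ⟨d + 1 + (n - n / 2) - n, d + 1, by omega, by omega, by omega, by omega,
            hadj.symm⟩
    obtain ⟨sw, sv, hsw0, hswd, hdsv, hsvn, hadj⟩ := key
    have hmw : a + ((sw : ℕ) : ZMod n) ∈ ((↑S : Set (ZMod n))ᶜ) := by
      simpa using hnotin sw hsw0 (by omega) (by omega)
    have hmv : a + ((sv : ℕ) : ZMod n) ∈ ((↑S : Set (ZMod n))ᶜ) := by
      simpa using hnotin sv (by omega) hsvn (by omega)
    have hxa : (p : ZMod n) = a + ((n - j1 : ℕ) : ZMod n) := by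
      rw [← hxdef, hadef, add_cast_add]
      have e : j1 + (n - j1) = n := by omega
      rw [e, ZMod.natCast_self, add_zero]
    have hya : (q : ZMod n) = a + ((k - j1 : ℕ) : ZMod n) := by
      rw [← hydef, hadef, add_cast_add x j1 (k - j1)]
      have e : j1 + (k - j1) = k := by omega
      rw [e]
      exact hyx
    have r1 : (SimpleGraph.induce ((↑S : Set (ZMod n))ᶜ) (cycleZ n ⊔ chordsZ n)).Reachable
        p ⟨_, hmv⟩ := by
      rcases le_total (n - j1) sv with h | h
      · exact harc (n - j1) sv (by omega) h hsvn (by intro j h1 h2; omega) p ⟨_, hmv⟩ hxa rfl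
      · exact (harc sv (n - j1) (by omega) h (by omega) (by intro j h1 h2; omega)
          ⟨_, hmv⟩ p rfl hxa).symm
    have r2 : (SimpleGraph.induce ((↑S : Set (ZMod n))ᶜ) (cycleZ n ⊔ chordsZ n)).Reachable
        ⟨_, hmw⟩ q := by
      rcases le_total sw (k - j1) with h | h
      · exact harc sw (k - j1) hsw0 h (by omega) (by intro j h1 h2; omega) ⟨_, hmw⟩ q rfl hya
      · exact (harc (k - j1) sw (by omega) h (by omega) (by intro j h1 h2; omega)
          q ⟨_, hmw⟩ hya rfl).symm
    have redge : (SimpleGraph.induce ((↑S : Set (ZMod n))ᶜ) (cycleZ n ⊔ chordsZ n)).Adj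
        ⟨_, hmv⟩ ⟨_, hmw⟩ := by
      show (cycleZ n ⊔ chordsZ n).Adj _ _
      exact hadj.symm
    exact r1.trans (redge.reachable.trans r2)


end CWCaux

theorem cycle_with_chords_three_connected (n : ℕ) [NeZero n] (hn : 5 ≤ n) :
    (cycleZ n ⊔ chordsZ n).IsVertexConnected 3 := by
  constructor
  · rw [ZMod.card n]; omega
  · intro S hS
    rw [SimpleGraph.connected_iff]
    constructor
    · intro p q
      exact CWCaux.main_reach hn S (by omega) p q
    · have hne : (Sᶜ : Finset (ZMod n)).Nonempty := by
        rw [← Finset.card_pos, Finset.card_compl, ZMod.card n]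
        omega
      obtain ⟨v, hv⟩ := hne
      exact ⟨⟨v, by simpa using hv⟩⟩
end
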